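/- Let S_⊥ be a non-trivial monoid with zero ⊥ and no non-zero zero-divisors, and X a set. Then on the C-set (S_⊥^X, 3^X) (pointwise monoid structure, action α[f,g](x) = f(x) if α(x)=T, g(x) if α(x)=F, ⊥ otherwise), the operation (f ∘ α)(x) = α(x) if f(x) ≠ ⊥ and U otherwise satisfies the semigroup-action axiom (f · g) ∘ α = f ∘ (g ∘ α) and the ∘-interchange axiom α[f,g] ∘ β = (α ∧ (f∘β)) ∨ (¬α ∧ (g∘β)). -/
import Mathlib


inductive Three | T | F | U
deriving DecidableEq

namespace Three

def neg : Three → Three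
  | T => F
  | F => T
  | U => U

def and : Three → Three → Three
  | T, x => x
  | F, _ => F
  | U, _ => U

def or : Three → Three → Three
  | T, _ => T
  | F, x => x
  | U, _ => U

end Three

/-- The pointwise if-then-else action of `3^X` on `S_⊥^X`. -/
def pact {X S : Type*} [Zero S] (α : X → Three) (f g : X → S) : X → S :=
  fun x =>
    match α x with
    | Three.T => f x
    | Three.F => g x
    | Three.U => 0

open Classical in
/-- `(f ∘ α)(x) = α x` if `f x ≠ ⊥`, and `U` otherwise. -/
noncomputable def pcomp {X S : Type*} [Zero S] (f : X → S) (α : X → Three) : X → Three :=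
  fun x => if f x = 0 then Three.U else α x

/-- On `(S_⊥^X, 3^X)`, `∘` satisfies the semigroup-action and ∘-interchange axioms. -/
theorem stmt17 {X S : Type*} [MonoidWithZero S] [NoZeroDivisors S] [Nontrivial S]
    (f g : X → S) (α β : X → Three) :
    (pcomp (fun x => f x * g x) α = pcomp f (pcomp g α)) ∧
    (pcomp (pact α f g) β =
      fun x => ((α x).and (pcomp f β x)).or ((α x).neg.and (pcomp g β x))) := by
  constructor
  · funext x
    simp only [pcomp, mul_eq_zero]
    by_cases hf : f x = 0 <;> by_cases hg : g x = 0 <;> simp [hf, hg]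
  · funext x
    rcases h : α x <;> by_cases hf : f x = 0 <;> by_cases hg : g x = 0 <;>
      simp [pcomp, pact, h, hf, hg, Three.and, Three.or, Three.neg] <;> cases β x <;> rfl
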